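/- Let K ⊆ ℕ be finite, let ρ ⊆ I × I be K-symmetric, and let L = ({0} × K) ∪ ({1} × ℕ). Then for all ξ, ξ' ∈ I \ L, the sets {η ∈ L : (ξ, η) ∈ ρ} and {η ∈ L : (ξ', η) ∈ ρ} are equal. -/
import Mathlib


/-- Membership in the group `𝔊` underlying the permutation model `Σ₃`: permutations of
`I = Fin 2 × ℕ` fixing every point of `{1} × ℕ`. -/
def InG3 (π : Equiv.Perm (Fin 2 × ℕ)) : Prop :=
  ∀ n : ℕ, π (1, n) = (1, n)

/-- `ρ ⊆ I × I` is `K`-symmetric (for `K ⊆ ℕ`): for every `π ∈ 𝔊` fixing every point of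
`{0} × K`, `(π ξ, π η) ∈ ρ ↔ (ξ, η) ∈ ρ`. -/
def SymmRel3 (K : Set ℕ) (ρ : Set ((Fin 2 × ℕ) × (Fin 2 × ℕ))) : Prop :=
  ∀ π : Equiv.Perm (Fin 2 × ℕ), InG3 π → (∀ k ∈ K, π (0, k) = (0, k)) →
    ∀ ξ η : Fin 2 × ℕ, ((π ξ, π η) ∈ ρ ↔ (ξ, η) ∈ ρ)

/-- For `K`-symmetric `ρ` and `L = ({0} × K) ∪ ({1} × ℕ)`, all `ξ, ξ' ∉ L` have the same
`ρ`-neighbours inside `L`. -/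
theorem stmt_11 (K : Set ℕ) (hK : K.Finite) (ρ : Set ((Fin 2 × ℕ) × (Fin 2 × ℕ)))
    (hρ : SymmRel3 K ρ)
    (L : Set (Fin 2 × ℕ))
    (hL : L = (({0} : Set (Fin 2)) ×ˢ K) ∪ (({1} : Set (Fin 2)) ×ˢ (Set.univ : Set ℕ))) :
    ∀ ξ ξ' : Fin 2 × ℕ, ξ ∉ L → ξ' ∉ L →
      {η ∈ L | (ξ, η) ∈ ρ} = {η ∈ L | (ξ', η) ∈ ρ} := by
  intro ξ ξ' hξ hξ'
  have hLmem : ∀ η : Fin 2 × ℕ, η ∈ L → η ≠ ξ ∧ η ≠ ξ' := by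
    intro η hη
    constructor <;> rintro rfl <;> [exact hξ hη; exact hξ' hη]
  set π := Equiv.swap ξ ξ' with hπ
  have hπL : ∀ η : Fin 2 × ℕ, η ∈ L → π η = η := by
    intro η hη
    exact Equiv.swap_apply_of_ne_of_ne (hLmem η hη).1 (hLmem η hη).2
  have h1 : ∀ n : ℕ, ((1 : Fin 2), n) ∈ L := by
    intro n; rw [hL]; exact Or.inr ⟨rfl, trivial⟩
  have h0 : ∀ k ∈ K, ((0 : Fin 2), k) ∈ L := by
    intro k hk; rw [hL]; exact Or.inl ⟨rfl, hk⟩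
  have hG : InG3 π := fun n => hπL _ (h1 n)
  have hfix : ∀ k ∈ K, π (0, k) = (0, k) := fun k hk => hπL _ (h0 k hk)
  ext η
  simp only [Set.mem_setOf_eq]
  constructor
  · rintro ⟨hη, hr⟩
    refine ⟨hη, ?_⟩
    have := hρ π hG hfix ξ η
    rw [Equiv.swap_apply_left, hπL η hη] at this
    exact this.mpr hr
  · rintro ⟨hη, hr⟩
    refine ⟨hη, ?_⟩
    have := hρ π hG hfix ξ' η
    rw [Equiv.swap_apply_right, hπL η hη] at this
    exact this.mpr hr
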